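/- Let α ∈ (0,1) and c, c' > 0. Suppose every subgraph of G on k vertices (for every k ≥ 1) has a balanced separator of cardinality at most c·k^α, every balanced separator of G itself has cardinality at least c'·n^α, and c'·n^α ≥ 2. Let π_nd be a nested dissection order of G in which the separator chosen at every recursion step on a k-vertex subgraph has cardinality at most c·k^α. Then there exists a constant K depending only on α, c and c' (not on G or n) such that for every contraction order π: the maximum over vertices v of the number of vertices in SS(v) under π_nd is at most K times the corresponding maximum under π; the same holds for the average number of vertices of SS(v), the maximum number of arcs of SS(v), and the average number of arcs of SS(v). In other words, a nested dissection order gives a constant-factor approximation of the optimal maximum and average search space sizes, in vertices and in arcs. -/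

import Mathlib

/-!
For an arbitrary order `π`, let the parent of a vertex be its upward neighbour in `G*π` of least
rank. Since upward neighbourhoods are cliques of `G*π`, every upward arc joins a vertex to one of
its ancestors in this elimination tree, and an arc leaving the subtree of `a` ends in the upward
neighbourhood of `a`. Take `a` whose subtree has more than `2n/3` vertices while the subtrees of
its children have at most `2n/3`: the pieces cut out by `a` and its upward neighbours pack into
two sides of at most `2n/3` vertices, so this clique `S` is a balanced separator, `|S| ≥ c'·n^α`,
and `S` lies in the search space of each of the more than `2n/3` vertices of the subtree. This
bounds the maxima and the averages under `π` from below by `c'·n^α` vertices and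
`(c'·n^α)²/4` arcs.

For the nested dissection order, an upward arc of `G*π` comes from a walk of `G` whose interior
is contracted before both ends. A search space started on one side of the top separator thus
stays on that side or enters the separator, where it stays; it collects one separator per level
of the recursion, of geometrically decreasing sizes, hence has at most `c·n^α / (1 - (2/3)^α)`
vertices.
-/

open SimpleGraph
open scoped ENNReal

variable {V : Type*}

/-- One step of vertex contraction: remove `v` from the current graph and add an edge
between every pair of its current neighbors. -/
def chStep (H : SimpleGraph V) (v : V) : SimpleGraph V where
  Adj a b := a ≠ b ∧ a ≠ v ∧ b ≠ v ∧ (H.Adj a b ∨ (H.Adj v a ∧ H.Adj v b))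
  symm := by
    constructor
    rintro a b ⟨h1, h2, h3, h4⟩
    refine ⟨h1.symm, h3, h2, ?_⟩
    rcases h4 with h | ⟨ha, hb⟩
    · exact Or.inl h.symm
    · exact Or.inr ⟨hb, ha⟩
  loopless := ⟨fun a h => h.1 rfl⟩

/-- All edges ever present while contracting the vertices of the list in order:
the edges of the initial graph together with all added shortcuts. -/
def chList : SimpleGraph V → List V → SimpleGraph V
  | H, [] => H
  | H, v :: l => H ⊔ chList (chStep H v) l

/-- The rank of a vertex with respect to the contraction order `π`. -/
def rk {n : ℕ} (π : Fin n ≃ V) (v : V) : ℕ := (π.symm v : ℕ)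

/-- The contraction hierarchy `G*π`: contract `π 0, π 1, …` in this order and collect
all original edges and all added shortcuts. -/
def chGraph {n : ℕ} (G : SimpleGraph V) (π : Fin n ≃ V) : SimpleGraph V :=
  chList G ((List.finRange n).map ⇑π)

/-- A list of vertices is up-down w.r.t. a rank function: ranks strictly increase
along a prefix and strictly decrease along the remaining suffix, the two parts
meeting at the maximum-rank vertex. -/
def IsUpDown (r : V → ℕ) (l : List V) : Prop :=
  ∃ l₁ x l₂, l = l₁ ++ x :: l₂ ∧
    List.Chain' (fun a b => r a < r b) (l₁ ++ [x]) ∧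
    List.Chain' (fun a b => r b < r a) (x :: l₂)

/-- Reachability in the upward directed graph `G^∧π` (edges of `G*π` directed from
lower to higher rank): the vertex set of the search space `SS v`. -/
def UpReach {n : ℕ} (G : SimpleGraph V) (π : Fin n ≃ V) (v u : V) : Prop :=
  Relation.ReflTransGen (fun a b => (chGraph G π).Adj a b ∧ rk π a < rk π b) v u

/-- Length of a walk: the sum of the weights of its edges. -/
noncomputable def wlen {H : SimpleGraph V} (m : V → V → ℝ≥0∞) {s t : V}
    (p : H.Walk s t) : ℝ≥0∞ :=
  (p.darts.map (fun d => m d.toProd.1 d.toProd.2)).sum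

/-- Shortest path distance in a graph `H` under edge weights `m`. -/
noncomputable def gdist (H : SimpleGraph V) (m : V → V → ℝ≥0∞) (s t : V) : ℝ≥0∞ :=
  ⨅ (p : H.Walk s t), wlen m p

/-- Minimum length of an up-down `s`-`t` path in `G*π`. -/
noncomputable def updist {n : ℕ} (G : SimpleGraph V) (π : Fin n ≃ V)
    (m : V → V → ℝ≥0∞) (s t : V) : ℝ≥0∞ :=
  ⨅ (p : (chGraph G π).Walk s t) (_ : IsUpDown (rk π) p.support), wlen m p

/-- Minimum length of a strictly rank-increasing `u`-`v` path in `G*π`. -/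
noncomputable def upOnlyDist {n : ℕ} (G : SimpleGraph V) (π : Fin n ≃ V)
    (m : V → V → ℝ≥0∞) (u v : V) : ℝ≥0∞ :=
  ⨅ (p : (chGraph G π).Walk u v)
    (_ : List.Chain' (fun a b => rk π a < rk π b) p.support), wlen m p

/-- `S` is a balanced separator of the subgraph of `G` induced by `U`. -/
def IsBalancedSepOn [DecidableEq V] (G : SimpleGraph V) (U S : Finset V) : Prop :=
  S ⊆ U ∧ ∃ A B : Finset V, A ⊆ U ∧ B ⊆ U ∧
    Disjoint A B ∧ Disjoint A S ∧ Disjoint B S ∧ A ∪ B ∪ S = U ∧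
    (∀ a ∈ A, ∀ b ∈ B, ¬ G.Adj a b) ∧
    3 * A.card ≤ 2 * U.card ∧ 3 * B.card ≤ 2 * U.card

/-- Nested dissection orders (as lists, earliest contracted first, separator last)
of induced subgraphs of `G`, in which the separator chosen at every recursion step on
a `k`-vertex subgraph is balanced and has cardinality at most `c * k ^ α`. -/
inductive IsNDOrder [DecidableEq V] (G : SimpleGraph V) (c α : ℝ) : Finset V → List V → Prop
  | empty : IsNDOrder G c α ∅ []
  | step {U S A B : Finset V} {lA lB lS : List V} :
      Disjoint A B → Disjoint A S → Disjoint B S → A ∪ B ∪ S = U →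
      (∀ a ∈ A, ∀ b ∈ B, ¬ G.Adj a b) →
      3 * A.card ≤ 2 * U.card → 3 * B.card ≤ 2 * U.card →
      ((S.card : ℝ) ≤ c * (U.card : ℝ) ^ α) →
      lS.Nodup → lS.toFinset = S →
      IsNDOrder G c α A lA → IsNDOrder G c α B lB →
      IsNDOrder G c α U (lA ++ lB ++ lS)

/-- Number of vertices of the search space `SS v` in `G^∧π`. -/
noncomputable def nVertsSS {n : ℕ} (G : SimpleGraph V) (π : Fin n ≃ V) (v : V) : ℕ :=
  {u | UpReach G π v u}.ncard

/-- Number of arcs of the search space `SS v` in `G^∧π`: arcs of `G^∧π` with both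
endpoints reachable from `v`. -/
noncomputable def nArcsSS {n : ℕ} (G : SimpleGraph V) (π : Fin n ≃ V) (v : V) : ℕ :=
  {q : V × V | (chGraph G π).Adj q.1 q.2 ∧ rk π q.1 < rk π q.2 ∧
    UpReach G π v q.1 ∧ UpReach G π v q.2}.ncard

/-- The rank sequence of a walk: for each edge, the minimum of the ranks of its
endpoints, sorted in decreasing order. -/
def rankSeq {H : SimpleGraph V} (r : V → ℕ) {s t : V} (p : H.Walk s t) : List ℕ :=
  (p.darts.map (fun d => min (r d.toProd.1) (r d.toProd.2))).insertionSort (· ≥ ·)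

/-- Directed length of a walk in `G*π` under a pair of directed metrics `(mu, md)`:
each edge traversed from lower rank to higher rank costs its upward weight,
each edge traversed from higher rank to lower rank costs its downward weight. -/
noncomputable def dlen {H : SimpleGraph V} (r : V → ℕ) (mu md : V → V → ℝ≥0∞)
    {s t : V} (p : H.Walk s t) : ℝ≥0∞ :=
  (p.darts.map (fun d =>
    if r d.toProd.1 < r d.toProd.2 then mu d.toProd.1 d.toProd.2
    else md d.toProd.2 d.toProd.1)).sum

/-- Length of a directed walk `s :: l` under arc weights `wD`. -/
noncomputable def dWalkLen (wD : V → V → ℝ≥0∞) : V → List V → ℝ≥0∞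
  | _, [] => 0
  | s, x :: l => wD s x + dWalkLen wD x l

/-- Shortest directed path distance in the directed graph `D` under arc weights `wD`. -/
noncomputable def ddist (D : V → V → Prop) (wD : V → V → ℝ≥0∞) (s t : V) : ℝ≥0∞ :=
  ⨅ (l : List V) (_ : List.Chain D s l ∧ l.getLastD s = t), dWalkLen wD s l


lemma le_chList (H : SimpleGraph V) : ∀ l : List V, H ≤ chList H l
  | [] => le_rfl
  | _ :: _ => le_sup_left

lemma not_adj_chStep_self (H : SimpleGraph V) (v w : V) : ¬ (chStep H v).Adj v w :=
  fun h => h.2.1 rfl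

lemma not_adj_chList_of_forall_not_adj {x : V} : ∀ (l : List V) {H : SimpleGraph V},
    (∀ w, ¬ H.Adj x w) → ∀ w, ¬ (chList H l).Adj x w
  | [], _, h => h
  | v :: l, H, h => by
    have hstep : ∀ w, ¬ (chStep H v).Adj x w := by
      rintro w ⟨-, -, -, hxw | ⟨hvx, -⟩⟩
      exacts [h w hxw, h v hvx.symm]
    rintro w (hw | hw)
    exacts [h w hw, not_adj_chList_of_forall_not_adj l hstep w hw]

lemma not_adj_chList_chStep_self (H : SimpleGraph V) (l : List V) (v w : V) :
    ¬ (chList (chStep H v) l).Adj v w :=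
  not_adj_chList_of_forall_not_adj l (not_adj_chStep_self H v) w

lemma exists_isChain_of_isChain_chStep {H : SimpleGraph V} {v b : V} :
    ∀ (l : List V) (a : V), List.IsChain (chStep H v).Adj (a :: l ++ [b]) →
      ∃ zs, List.IsChain H.Adj (a :: zs ++ [b]) ∧ zs ⊆ v :: l
  | [], a, h => by
    obtain ⟨-, -, -, hab | ⟨hva, hvb⟩⟩ := List.isChain_pair.1 h
    · exact ⟨[], by simpa using hab, by simp⟩
    · exact ⟨[v], by simpa using ⟨hva.symm, hvb⟩, by simp⟩
  | x :: l, a, h => by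
    obtain ⟨⟨-, -, -, hax | ⟨hva, hvx⟩⟩, hrest⟩ := List.isChain_cons_cons.1 h
    all_goals obtain ⟨zs, hzs, hsub⟩ := exists_isChain_of_isChain_chStep l x hrest
    · refine ⟨x :: zs, List.isChain_cons_cons.2 ⟨hax, hzs⟩, ?_⟩
      exact List.cons_subset.2 ⟨by simp, List.Subset.trans hsub (by simp)⟩
    · refine ⟨v :: x :: zs, ?_, ?_⟩
      · simpa using ⟨hva.symm, hvx, hzs⟩
      · simp only [List.cons_subset]
        exact ⟨by simp, by simp, List.Subset.trans hsub (by simp)⟩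

lemma isChain_forall_mem_and_exists_rel {R : V → V → Prop} {P : V → Prop} {y : V} :
    ∀ {a : V} {zs : List V}, List.IsChain R (a :: zs ++ [y]) → P a →
      (∀ x, ∀ z ∈ zs, P x → R x z → P z) → (∀ z ∈ zs, P z) ∧ ∃ w, P w ∧ R w y
  | a, [], h, ha, _ => ⟨by simp, a, ha, List.isChain_pair.1 h⟩
  | a, z :: zs, h, ha, hP => by
    obtain ⟨haz, h⟩ := List.isChain_cons_cons.1 h
    have hz := hP a z List.mem_cons_self ha haz
    obtain ⟨hzs, hw⟩ :=
      isChain_forall_mem_and_exists_rel h hz fun x z' hz' => hP x z' (List.mem_cons_of_mem _ hz')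
    exact ⟨List.forall_mem_cons.2 ⟨hz, hzs⟩, hw⟩

section Order

variable [DecidableEq V]

lemma chList_adj_of_adj_of_adj {x y z : V} : ∀ (l : List V) (H : SimpleGraph V),
    (chList H l).Adj x y → (chList H l).Adj x z →
    l.idxOf x < l.idxOf y → l.idxOf x < l.idxOf z → y ≠ z → (chList H l).Adj y z
  | [], _, _, _, hy, _, _ => by simp at hy
  | v :: l, H, hxy, hxz, hy, hz, hyz => by
    by_cases hxv : x = v
    · subst hxv
      have h1 : H.Adj x y := hxy.resolve_right (not_adj_chList_chStep_self H l x y)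
      have h2 : H.Adj x z := hxz.resolve_right (not_adj_chList_chStep_self H l x z)
      exact Or.inr (le_chList _ l ⟨hyz, h1.ne', h2.ne', Or.inr ⟨h1, h2⟩⟩)
    · have hlater : ∀ w, (v :: l).idxOf x < (v :: l).idxOf w → w ≠ v := by
        rintro w hw rfl
        simp at hw
      have lift : ∀ w, (v :: l).idxOf x < (v :: l).idxOf w → (chList H (v :: l)).Adj x w →
          (chList (chStep H v) l).Adj x w := by
        rintro w hw (h | h)
        exacts [le_chList _ l ⟨h.ne, hxv, hlater w hw, Or.inl h⟩, h]
      have hyv := hlater y hy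
      have hzv := hlater z hz
      have hxy' := lift y hy hxy
      have hxz' := lift z hz hxz
      rw [List.idxOf_cons_ne l (Ne.symm hxv), List.idxOf_cons_ne l (Ne.symm hyv)] at hy
      rw [List.idxOf_cons_ne l (Ne.symm hxv), List.idxOf_cons_ne l (Ne.symm hzv)] at hz
      exact Or.inr (chList_adj_of_adj_of_adj l _ hxy' hxz' (by omega) (by omega) hyz)

lemma exists_isChain_of_chList_adj {a b : V} :
    ∀ (l : List V) (H : SimpleGraph V), (chList H l).Adj a b →
      ∃ zs, List.IsChain H.Adj (a :: zs ++ [b]) ∧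
        ∀ z ∈ zs, l.idxOf z < l.idxOf a ∧ l.idxOf z < l.idxOf b
  | [], _, h => ⟨[], List.isChain_pair.2 h, by simp⟩
  | v :: l, H, h => by
    rcases h with h | h
    · exact ⟨[], List.isChain_pair.2 h, by simp⟩
    have hav : a ≠ v := by rintro rfl; exact not_adj_chList_chStep_self H l a b h
    have hbv : b ≠ v := by rintro rfl; exact not_adj_chList_chStep_self H l b a h.symm
    obtain ⟨zs, hch, hzs⟩ := exists_isChain_of_chList_adj l _ h
    obtain ⟨zs', hch', hsub⟩ := exists_isChain_of_isChain_chStep zs a hch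
    refine ⟨zs', hch', fun z hz => ?_⟩
    rw [List.idxOf_cons_ne l (Ne.symm hav), List.idxOf_cons_ne l (Ne.symm hbv)]
    by_cases hzv : z = v
    · subst hzv; simp
    · rw [List.idxOf_cons_ne l (Ne.symm hzv)]
      have := hzs z ((List.mem_cons.1 (hsub hz)).resolve_left hzv)
      omega

end Order

section Rank

variable {n : ℕ} {G : SimpleGraph V} {π : Fin n ≃ V}

lemma rk_injective (π : Fin n ≃ V) : Function.Injective (rk π) :=
  fun _ _ h => π.symm.injective (Fin.ext h)

lemma idxOf_map_finRange [DecidableEq V] (π : Fin n ≃ V) (v : V) :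
    ((List.finRange n).map π).idxOf v = rk π v := by
  obtain ⟨i, rfl⟩ := π.surjective v
  have h : (fun x => π x == π i) = (· == i) := by
    funext x; simp [π.injective.eq_iff]
  simp only [rk, Equiv.symm_apply_apply, List.idxOf, List.findIdx_map, Function.comp_def, h]
  exact List.idxOf_finRange i

lemma le_chGraph : G ≤ chGraph G π := le_chList G _

lemma chGraph_adj_of_adj {x y z : V} (hxy : (chGraph G π).Adj x y)
    (hxz : (chGraph G π).Adj x z) (hy : rk π x < rk π y) (hz : rk π x < rk π z) (hyz : y ≠ z) :
    (chGraph G π).Adj y z := by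
  classical
  refine chList_adj_of_adj_of_adj _ G hxy hxz ?_ ?_ hyz <;>
    simpa only [idxOf_map_finRange]

end Rank

section EliminationTree

variable [Fintype V] {n : ℕ} {G : SimpleGraph V} {π : Fin n ≃ V}

open Classical in
noncomputable def upNbrs (G : SimpleGraph V) (π : Fin n ≃ V) (x : V) : Finset V :=
  {y | (chGraph G π).Adj x y ∧ rk π x < rk π y}

lemma mem_upNbrs {x y : V} : y ∈ upNbrs G π x ↔ (chGraph G π).Adj x y ∧ rk π x < rk π y := by
  simp [upNbrs]

/-- The parent of `x` in the elimination tree of `π`. -/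
noncomputable def parent (G : SimpleGraph V) (π : Fin n ≃ V) (x : V) : V :=
  if h : (upNbrs G π x).Nonempty then
    Classical.choose ((upNbrs G π x).exists_min_image (rk π) h)
  else x

lemma parent_mem_upNbrs {x : V} (h : (upNbrs G π x).Nonempty) :
    parent G π x ∈ upNbrs G π x := by
  rw [parent, dif_pos h]
  exact (Classical.choose_spec ((upNbrs G π x).exists_min_image (rk π) h)).1

lemma rk_parent_le {x y : V} (hy : y ∈ upNbrs G π x) : rk π (parent G π x) ≤ rk π y := by
  have h : (upNbrs G π x).Nonempty := ⟨y, hy⟩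
  rw [parent, dif_pos h]
  exact (Classical.choose_spec ((upNbrs G π x).exists_min_image (rk π) h)).2 y hy

lemma parent_eq_self_or_mem_upNbrs (x : V) :
    parent G π x = x ∨ parent G π x ∈ upNbrs G π x := by
  by_cases h : (upNbrs G π x).Nonempty
  · exact Or.inr (parent_mem_upNbrs h)
  · exact Or.inl (dif_neg h)

lemma rk_le_rk_iterate_parent (x : V) (i : ℕ) : rk π x ≤ rk π ((parent G π)^[i] x) := by
  induction i with
  | zero => rfl
  | succ i ih =>
    rw [Function.iterate_succ_apply']
    rcases parent_eq_self_or_mem_upNbrs (G := G) (π := π) ((parent G π)^[i] x) with h | h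
    · rwa [h]
    · exact ih.trans (mem_upNbrs.1 h).2.le

lemma rk_lt_of_parent_eq {c a : V} (h : parent G π c = a) (hne : c ≠ a) : rk π c < rk π a := by
  rcases parent_eq_self_or_mem_upNbrs (G := G) (π := π) c with h' | h'
  · exact absurd (h.symm.trans h') hne.symm
  · exact h ▸ (mem_upNbrs.1 h').2

/-- The upward neighbourhood of `x` is a clique of `G*π` whose vertex of least rank is the
parent. -/
lemma mem_upNbrs_parent {x y : V} (hy : y ∈ upNbrs G π x) (hne : y ≠ parent G π x) :
    y ∈ upNbrs G π (parent G π x) := by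
  have hp := mem_upNbrs.1 (parent_mem_upNbrs ⟨y, hy⟩)
  have hlt : rk π (parent G π x) < rk π y :=
    (rk_parent_le hy).lt_of_ne fun h => hne (rk_injective π h).symm
  exact mem_upNbrs.2 ⟨chGraph_adj_of_adj hp.1 (mem_upNbrs.1 hy).1 hp.2 (mem_upNbrs.1 hy).2
    hne.symm, hlt⟩

lemma mem_upNbrs_iterate_parent {y : V} :
    ∀ (i : ℕ) {x : V}, y ∈ upNbrs G π x → (∀ j ≤ i, (parent G π)^[j] x ≠ y) →
      y ∈ upNbrs G π ((parent G π)^[i] x)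
  | 0, _, hy, _ => hy
  | i + 1, x, hy, hne => by
    rw [Function.iterate_succ_apply]
    exact mem_upNbrs_iterate_parent i (mem_upNbrs_parent hy (hne 1 (by omega)).symm)
      fun j hj => hne (j + 1) (by omega)

lemma exists_iterate_parent_eq {x y : V} (hy : y ∈ upNbrs G π x) :
    ∃ i, (parent G π)^[i] x = y := by
  by_contra! hne
  have hup : ∀ i, y ∈ upNbrs G π ((parent G π)^[i] x) :=
    fun i => mem_upNbrs_iterate_parent i hy fun j _ => hne j
  have hgrow : ∀ i, rk π x + i ≤ rk π ((parent G π)^[i] x) := by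
    intro i
    induction i with
    | zero => simp
    | succ i ih =>
      rw [Function.iterate_succ_apply']
      have := (mem_upNbrs.1 (parent_mem_upNbrs ⟨y, hup i⟩)).2
      omega
  have := (mem_upNbrs.1 (hup (rk π y))).2
  have := hgrow (rk π y)
  omega

open Classical in
noncomputable def descendants (G : SimpleGraph V) (π : Fin n ≃ V) (a : V) : Finset V :=
  {v | ∃ i, (parent G π)^[i] v = a}

lemma mem_descendants {a v : V} : v ∈ descendants G π a ↔ ∃ i, (parent G π)^[i] v = a := by
  simp [descendants]

lemma self_mem_descendants (a : V) : a ∈ descendants G π a := mem_descendants.2 ⟨0, rfl⟩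

lemma rk_le_of_mem_descendants {a v : V} (h : v ∈ descendants G π a) : rk π v ≤ rk π a := by
  obtain ⟨i, rfl⟩ := mem_descendants.1 h
  exact rk_le_rk_iterate_parent v i

lemma iterate_parent_mem_descendants {a v : V} {i : ℕ} (h : (parent G π)^[i] v = a) {j : ℕ}
    (hj : j ≤ i) : (parent G π)^[j] v ∈ descendants G π a :=
  mem_descendants.2 ⟨i - j, by rw [← Function.iterate_add_apply, Nat.sub_add_cancel hj, h]⟩

lemma descendants_subset_of_parent_eq {c a : V} (h : parent G π c = a) :
    descendants G π c ⊆ descendants G π a := by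
  intro v hv
  obtain ⟨i, hi⟩ := mem_descendants.1 hv
  exact mem_descendants.2 ⟨i + 1, by rw [Function.iterate_succ_apply', hi, h]⟩

lemma upReach_iterate_parent (v : V) (i : ℕ) : UpReach G π v ((parent G π)^[i] v) := by
  induction i with
  | zero => exact Relation.ReflTransGen.refl
  | succ i ih =>
    rw [Function.iterate_succ_apply']
    rcases parent_eq_self_or_mem_upNbrs (G := G) (π := π) ((parent G π)^[i] v) with hp | hp
    · rwa [hp]
    · exact ih.tail (mem_upNbrs.1 hp)

lemma upReach_of_mem_descendants {a v : V} (h : v ∈ descendants G π a) : UpReach G π v a := by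
  obtain ⟨i, rfl⟩ := mem_descendants.1 h
  exact upReach_iterate_parent v i

lemma mem_upNbrs_of_adj {a x y : V} (hx : x ∈ descendants G π a) (hxy : (chGraph G π).Adj x y)
    (hy : y ∉ descendants G π a) : y ∈ upNbrs G π a := by
  obtain ⟨i, hi⟩ := mem_descendants.1 hx
  have hxy' : y ∈ upNbrs G π x := by
    refine mem_upNbrs.2 ⟨hxy, lt_of_not_ge fun hle => hy ?_⟩
    have hlt : rk π y < rk π x := hle.lt_of_ne fun h => hxy.ne (rk_injective π h).symm
    obtain ⟨j, hj⟩ := exists_iterate_parent_eq (mem_upNbrs.2 ⟨hxy.symm, hlt⟩)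
    exact mem_descendants.2 ⟨i + j, by rw [Function.iterate_add_apply, hj, hi]⟩
  rw [← hi]
  exact mem_upNbrs_iterate_parent i hxy' fun j hj h =>
    hy (h ▸ iterate_parent_mem_descendants hi hj)

lemma iterate_parent_ne_of_parent_eq {c a : V} (h : parent G π c = a) (hne : c ≠ a) (k : ℕ) :
    (parent G π)^[k] a ≠ c :=
  fun hk => (rk_lt_of_parent_eq h hne).not_ge (hk ▸ rk_le_rk_iterate_parent a k)

lemma disjoint_descendants_of_parent_eq {a c c' : V} (hc : parent G π c = a) (hca : c ≠ a)
    (hc' : parent G π c' = a) (hc'a : c' ≠ a) (hcc' : c ≠ c') :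
    Disjoint (descendants G π c) (descendants G π c') := by
  have key : ∀ {c c' v : V} {i j : ℕ}, parent G π c = a → parent G π c' = a → c' ≠ a →
      c ≠ c' → i ≤ j → (parent G π)^[i] v = c → (parent G π)^[j] v = c' → False := by
    intro c c' v i j hc hc' hc'a hcc' hij hi hj
    obtain ⟨k, rfl⟩ := Nat.exists_eq_add_of_le hij
    rw [add_comm, Function.iterate_add_apply, hi] at hj
    cases k with
    | zero => exact hcc' hj
    | succ k =>
      rw [Function.iterate_succ_apply, hc] at hj
      exact iterate_parent_ne_of_parent_eq hc' hc'a k hj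
  refine Finset.disjoint_left.2 fun v hv hv' => ?_
  obtain ⟨i, hi⟩ := mem_descendants.1 hv
  obtain ⟨j, hj⟩ := mem_descendants.1 hv'
  rcases le_total i j with hij | hji
  exacts [key hc hc' hc'a hcc' hij hi hj, key hc' hc hca hcc'.symm hji hj hi]

lemma exists_parent_eq_of_mem_descendants {a v : V} (hv : v ∈ descendants G π a) (hne : v ≠ a) :
    ∃ c, parent G π c = a ∧ c ≠ a ∧ v ∈ descendants G π c := by
  obtain ⟨i, hi⟩ := mem_descendants.1 hv
  induction i with
  | zero => exact absurd hi hne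
  | succ i ih =>
    rw [Function.iterate_succ_apply'] at hi
    by_cases hu : (parent G π)^[i] v = a
    · exact ih hu
    · exact ⟨_, hi, hu, mem_descendants.2 ⟨i, rfl⟩⟩

lemma mem_descendants_of_adj [DecidableEq V] {a c x y : V} (hc : parent G π c = a)
    (hx : x ∈ descendants G π c) (hxy : (chGraph G π).Adj x y)
    (hy : y ∉ insert a (upNbrs G π a)) : y ∈ descendants G π c := by
  by_contra hyc
  rw [Finset.mem_insert, not_or] at hy
  by_cases hya : y ∈ descendants G π a
  · obtain ⟨c', hc', hc'a, hyc'⟩ := exists_parent_eq_of_mem_descendants hya hy.1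
    have hcc' : c ≠ c' := by rintro rfl; exact hyc hyc'
    have h1 := rk_parent_le (mem_upNbrs_of_adj hx hxy hyc)
    rw [hc] at h1
    have h2 := rk_le_of_mem_descendants hyc'
    have h3 := rk_lt_of_parent_eq hc' hc'a
    omega
  · exact hy.2 (mem_upNbrs_of_adj (descendants_subset_of_parent_eq hc hx) hxy hya)

lemma descendants_eq_univ (hG : G.Connected) {t : V} (ht : ∀ v, rk π v ≤ rk π t) :
    descendants G π t = Finset.univ := by
  refine Finset.eq_univ_of_forall fun w => by_contra fun hw => ?_
  obtain ⟨d, -, hd1, hd2⟩ := (hG.preconnected t w).some.exists_boundary_dart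
    (descendants G π t : Set V) (self_mem_descendants t) hw
  exact (mem_upNbrs.1 (mem_upNbrs_of_adj hd1 (le_chGraph d.adj) hd2)).2.not_ge (ht _)

lemma exists_large_descendants_small_children (hG : G.Connected) [Nonempty V] :
    ∃ a, 2 * Fintype.card V < 3 * (descendants G π a).card ∧
      ∀ c, parent G π c = a → c ≠ a → 3 * (descendants G π c).card ≤ 2 * Fintype.card V := by
  classical
  obtain ⟨t, -, ht⟩ := Finset.univ.exists_max_image (rk π) Finset.univ_nonempty
  have hlarge : 2 * Fintype.card V < 3 * (descendants G π t).card := by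
    rw [descendants_eq_univ hG fun v => ht v (Finset.mem_univ v), Finset.card_univ]
    have := Fintype.card_pos (α := V)
    omega
  obtain ⟨a, ha, hmin⟩ := (Finset.univ.filter fun a =>
    2 * Fintype.card V < 3 * (descendants G π a).card).exists_min_image
      (fun a => (descendants G π a).card) ⟨t, by simpa using hlarge⟩
  simp only [Finset.mem_filter, Finset.mem_univ, true_and] at ha hmin
  refine ⟨a, ha, fun c hc hca => not_lt.1 fun hlt => ?_⟩
  have hsub : descendants G π c ⊂ descendants G π a := by
    refine Finset.ssubset_iff_subset_ne.2 ⟨descendants_subset_of_parent_eq hc, fun heq => ?_⟩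
    have := rk_le_of_mem_descendants (heq ▸ self_mem_descendants a)
    exact (rk_lt_of_parent_eq hc hca).not_ge this
  exact (Finset.card_lt_card hsub).not_ge (hmin c hlt)

end EliminationTree

section Separator

lemma exists_subset_three_mul_sum_le {ι : Type*} [DecidableEq ι] (s : Finset ι) (f : ι → ℕ)
    (N : ℕ) (hf : ∀ i ∈ s, 3 * f i ≤ 2 * N) (hs : ∑ i ∈ s, f i ≤ N) :
    ∃ I ⊆ s, 3 * ∑ i ∈ I, f i ≤ 2 * N ∧ 3 * ∑ i ∈ s \ I, f i ≤ 2 * N := by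
  obtain ⟨I, hI, hmax⟩ := (s.powerset.filter fun I => 3 * ∑ i ∈ I, f i ≤ 2 * N).exists_max_image
    (fun I => ∑ i ∈ I, f i) ⟨∅, by simp⟩
  simp only [Finset.mem_filter, Finset.mem_powerset, and_imp] at hI hmax
  refine ⟨I, hI.1, hI.2, not_lt.1 fun hlt => ?_⟩
  have hsplit := Finset.sum_sdiff hI.1 (f := f)
  obtain ⟨p, hp, hfp⟩ : ∃ p ∈ s \ I, 0 < f p := by
    by_contra! h
    have := Finset.sum_eq_zero fun i hi => Nat.eq_zero_of_le_zero (h i hi)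
    omega
  obtain ⟨hps, hpI⟩ := Finset.mem_sdiff.1 hp
  -- `I` is a maximal admissible part, so it beats `{p}`, but `insert p I` is not admissible
  have h1 : f p ≤ ∑ i ∈ I, f i := by
    simpa using hmax {p} (by simpa using hps) (by simpa using hf p hps)
  have h2 : 2 * N < 3 * (f p + ∑ i ∈ I, f i) := by
    by_contra! h
    have := hmax (insert p I) (Finset.insert_subset hps hI.1) (by rwa [Finset.sum_insert hpI])
    rw [Finset.sum_insert hpI] at this
    omega
  omega

variable [Fintype V] [DecidableEq V] {G : SimpleGraph V}

lemma isBalancedSepOn_univ_of_pieces {S : Finset V} (P : Finset (Finset V))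
    (hdisj : (P : Set (Finset V)).PairwiseDisjoint id) (hcover : ∀ v ∉ S, ∃ X ∈ P, v ∈ X)
    (hsmall : ∀ X ∈ P, 3 * X.card ≤ 2 * Fintype.card V)
    (hclosed : ∀ X ∈ P, ∀ x ∈ X, ∀ y, x ∉ S → y ∉ S → G.Adj x y → y ∈ X) :
    IsBalancedSepOn G Finset.univ S := by
  have htot : ∑ X ∈ P, X.card ≤ Fintype.card V :=
    (Finset.card_biUnion hdisj).symm.trans_le (Finset.card_le_univ _)
  obtain ⟨I, hIP, hI, hJ⟩ := exists_subset_three_mul_sum_le P Finset.card _ hsmall htot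
  have hside : ∀ J : Finset (Finset V), 3 * ∑ X ∈ J, X.card ≤ 2 * Fintype.card V →
      3 * (J.biUnion id \ S).card ≤ 2 * (Finset.univ : Finset V).card := fun J hJ => by
    have : (J.biUnion id \ S).card ≤ ∑ X ∈ J, X.card :=
      (Finset.card_le_card Finset.sdiff_subset).trans Finset.card_biUnion_le
    rw [Finset.card_univ]
    omega
  have hsplit : ∀ y ∈ (P \ I).biUnion id, ∀ X ∈ I, y ∉ X := by
    intro y hy X hX hyX
    obtain ⟨Y, hY, hyY⟩ := Finset.mem_biUnion.1 hy
    obtain ⟨hYP, hYI⟩ := Finset.mem_sdiff.1 hY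
    exact hYI (hdisj.elim_finset hYP (hIP hX) y hyY hyX ▸ hX)
  refine ⟨Finset.subset_univ S, I.biUnion id \ S, (P \ I).biUnion id \ S, Finset.subset_univ _,
    Finset.subset_univ _, Finset.disjoint_left.2 fun x hxA hxB => ?_, Finset.sdiff_disjoint,
    Finset.sdiff_disjoint, Finset.eq_univ_of_forall fun v => ?_, fun x hxA y hyB hxy => ?_,
    hside I hI, hside (P \ I) hJ⟩
  · obtain ⟨X, hX, hxX⟩ := Finset.mem_biUnion.1 (Finset.mem_sdiff.1 hxA).1
    exact hsplit x (Finset.mem_sdiff.1 hxB).1 X hX hxX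
  · by_cases hvS : v ∈ S
    · exact Finset.mem_union_right _ hvS
    obtain ⟨X, hX, hvX⟩ := hcover v hvS
    by_cases hXI : X ∈ I
    · have : v ∈ I.biUnion id := Finset.mem_biUnion.2 ⟨X, hXI, hvX⟩
      simp [hvS, this]
    · have : v ∈ (P \ I).biUnion id :=
        Finset.mem_biUnion.2 ⟨X, Finset.mem_sdiff.2 ⟨hX, hXI⟩, hvX⟩
      simp [hvS, this]
  · obtain ⟨X, hX, hxX⟩ := Finset.mem_biUnion.1 (Finset.mem_sdiff.1 hxA).1
    exact hsplit y (Finset.mem_sdiff.1 hyB).1 X hX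
      (hclosed X (hIP hX) x hxX y (Finset.mem_sdiff.1 hxA).2 (Finset.mem_sdiff.1 hyB).2 hxy)

end Separator

section Counting

variable [Fintype V] {n : ℕ} {G : SimpleGraph V} {π : Fin n ≃ V}

lemma card_le_nVertsSS {v : V} {S : Finset V} (hS : ∀ s ∈ S, UpReach G π v s) :
    S.card ≤ nVertsSS G π v := by
  rw [nVertsSS, ← Set.ncard_coe_finset]
  exact Set.ncard_le_ncard hS (Set.toFinite _)

lemma card_mul_card_le_nArcsSS {v : V} {S : Finset V} (hS : ∀ s ∈ S, UpReach G π v s)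
    (hcl : (chGraph G π).IsClique (S : Set V)) :
    S.card * S.card ≤ 2 * nArcsSS G π v + S.card := by
  classical
  set P := S.offDiag.filter fun q => rk π q.1 < rk π q.2
  have hP : P.card ≤ nArcsSS G π v := by
    rw [nArcsSS, ← Set.ncard_coe_finset]
    refine Set.ncard_le_ncard (fun q hq => ?_) (Set.toFinite _)
    simp only [P, Finset.coe_filter, Finset.mem_offDiag, Set.mem_setOf_eq] at hq
    exact ⟨hcl hq.1.1 hq.1.2.1 hq.1.2.2, hq.2, hS _ hq.1.1, hS _ hq.1.2.1⟩
  -- the other half of the off-diagonal pairs is the image of `P` under swapping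
  have hswap : (S.offDiag.filter fun q => ¬ rk π q.1 < rk π q.2).card = P.card := by
    refine Finset.card_equiv (Equiv.prodComm V V) fun q => ?_
    simp only [P, Finset.mem_filter, Finset.mem_offDiag, Equiv.prodComm_apply, Prod.fst_swap,
      Prod.snd_swap, not_lt]
    constructor <;> rintro ⟨⟨h1, h2, h3⟩, h4⟩ <;> refine ⟨⟨h2, h1, Ne.symm h3⟩, ?_⟩
    · exact h4.lt_of_ne fun h => h3 (rk_injective π h).symm
    · exact h4.le
  have hsplit : P.card + (S.offDiag.filter fun q => ¬ rk π q.1 < rk π q.2).card =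
      S.card * S.card - S.card :=
    (Finset.card_filter_add_card_filter_not _).trans (Finset.offDiag_card S)
  omega

lemma nVertsSS_le_card {v : V} {R : Finset V} (hR : ∀ u, UpReach G π v u → u ∈ R) :
    nVertsSS G π v ≤ R.card := by
  rw [nVertsSS, ← Set.ncard_coe_finset]
  exact Set.ncard_le_ncard (fun u hu => hR u hu) (Set.toFinite _)

lemma nArcsSS_le_card_mul_card {v : V} {R : Finset V} (hR : ∀ u, UpReach G π v u → u ∈ R) :
    nArcsSS G π v ≤ R.card * R.card := by
  rw [nArcsSS, ← Finset.card_product, ← Set.ncard_coe_finset]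
  refine Set.ncard_le_ncard (fun q hq => ?_) (Set.toFinite _)
  simpa using ⟨hR _ hq.2.2.1, hR _ hq.2.2.2⟩

end Counting

section LowerBound

variable [Fintype V] [DecidableEq V] {n : ℕ} {G : SimpleGraph V} {π : Fin n ≃ V}

lemma isBalancedSepOn_insert_upNbrs {a : V}
    (ha : 2 * Fintype.card V < 3 * (descendants G π a).card)
    (hch : ∀ c, parent G π c = a → c ≠ a →
      3 * (descendants G π c).card ≤ 2 * Fintype.card V) :
    IsBalancedSepOn G Finset.univ (insert a (upNbrs G π a)) := by
  set C := Finset.univ.filter fun c => parent G π c = a ∧ c ≠ a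
  have hC : ∀ c, c ∈ C ↔ parent G π c = a ∧ c ≠ a := by simp [C]
  refine isBalancedSepOn_univ_of_pieces
    (insert (Finset.univ \ descendants G π a) (C.image (descendants G π))) ?_ ?_ ?_ ?_
  · intro X hX Y hY hXY
    simp only [Finset.coe_insert, Finset.coe_image, Set.mem_insert_iff, Set.mem_image,
      Finset.mem_coe, hC] at hX hY
    rcases hX with rfl | ⟨c, ⟨hc, hca⟩, rfl⟩ <;> rcases hY with rfl | ⟨c', ⟨hc', hc'a⟩, rfl⟩
    · exact absurd rfl hXY
    · exact Finset.sdiff_disjoint.mono_right (descendants_subset_of_parent_eq hc')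
    · exact Finset.disjoint_sdiff.mono_left (descendants_subset_of_parent_eq hc)
    · exact disjoint_descendants_of_parent_eq hc hca hc' hc'a (by rintro rfl; exact hXY rfl)
  · intro v hv
    by_cases hva : v ∈ descendants G π a
    · obtain ⟨c, hc, hca, hvc⟩ :=
        exists_parent_eq_of_mem_descendants hva fun hva' => hv (hva' ▸ Finset.mem_insert_self _ _)
      exact ⟨_, Finset.mem_insert_of_mem (Finset.mem_image_of_mem _ ((hC c).2 ⟨hc, hca⟩)), hvc⟩
    · exact ⟨_, Finset.mem_insert_self _ _, by simpa using hva⟩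
  · intro X hX
    rcases Finset.mem_insert.1 hX with rfl | hX
    · rw [Finset.card_sdiff_of_subset (Finset.subset_univ _), Finset.card_univ]
      omega
    · obtain ⟨c, hc, rfl⟩ := Finset.mem_image.1 hX
      exact hch c ((hC c).1 hc).1 ((hC c).1 hc).2
  · intro X hX x hx y hxS hyS hxy
    rcases Finset.mem_insert.1 hX with rfl | hX
    · simp only [Finset.mem_sdiff, Finset.mem_univ, true_and] at hx ⊢
      exact fun hya => hxS (Finset.mem_insert_of_mem
        (mem_upNbrs_of_adj hya (le_chGraph hxy.symm) hx))
    · obtain ⟨c, hc, rfl⟩ := Finset.mem_image.1 hX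
      exact mem_descendants_of_adj ((hC c).1 hc).1 hx (le_chGraph hxy) hyS

lemma isClique_insert_upNbrs (a : V) :
    (chGraph G π).IsClique (insert a (upNbrs G π a) : Finset V) := by
  rw [Finset.coe_insert, isClique_insert]
  refine ⟨fun s hs t ht hst => ?_, fun s hs _ => (mem_upNbrs.1 hs).1⟩
  have hs := mem_upNbrs.1 hs
  have ht := mem_upNbrs.1 ht
  exact chGraph_adj_of_adj hs.1 ht.1 hs.2 ht.2 hst

lemma upReach_of_mem_insert_upNbrs {a v s : V} (hv : v ∈ descendants G π a)
    (hs : s ∈ insert a (upNbrs G π a)) : UpReach G π v s := by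
  rcases Finset.mem_insert.1 hs with rfl | hs
  · exact upReach_of_mem_descendants hv
  · exact (upReach_of_mem_descendants hv).tail (mem_upNbrs.1 hs)

theorem exists_large_le_nVertsSS_and_nArcsSS (hG : G.Connected) [Nonempty V] (π : Fin n ≃ V)
    {Y : ℝ} (hY : 2 ≤ Y) (hsep : ∀ S, IsBalancedSepOn G Finset.univ S → Y ≤ S.card) :
    ∃ T : Finset V, 2 * Fintype.card V < 3 * T.card ∧
      ∀ v ∈ T, Y ≤ nVertsSS G π v ∧ Y ^ 2 / 4 ≤ nArcsSS G π v := by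
  obtain ⟨a, ha, hch⟩ := exists_large_descendants_small_children (π := π) hG
  set S := insert a (upNbrs G π a)
  have hYS : Y ≤ S.card := hsep S (isBalancedSepOn_insert_upNbrs ha hch)
  refine ⟨descendants G π a, ha, fun v hv => ?_⟩
  have hS := fun s => upReach_of_mem_insert_upNbrs (s := s) hv
  have hV : (S.card : ℝ) ≤ nVertsSS G π v := by exact_mod_cast card_le_nVertsSS hS
  have hA : (S.card * S.card : ℝ) ≤ 2 * nArcsSS G π v + S.card := by
    exact_mod_cast card_mul_card_le_nArcsSS hS (isClique_insert_upNbrs a)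
  refine ⟨hYS.trans hV, ?_⟩
  nlinarith [mul_self_le_mul_self (by linarith) hYS,
    mul_nonneg (by linarith : (0 : ℝ) ≤ S.card) (by linarith : (0 : ℝ) ≤ S.card - 2)]

end LowerBound

section LowWalk

variable [DecidableEq V] {G : SimpleGraph V}

/-- By `exists_isChain_of_chList_adj`, every upward arc of the contraction hierarchy of `l` is a
low walk. -/
def LowWalk (G : SimpleGraph V) (l : List V) (x y : V) : Prop :=
  y ∈ l ∧ l.idxOf x < l.idxOf y ∧
    ∃ zs : List V, List.IsChain G.Adj (x :: zs ++ [y]) ∧ ∀ z ∈ zs, l.idxOf z < l.idxOf x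

def IsLowClosed (G : SimpleGraph V) (l : List V) (R : Finset V) : Prop :=
  ∀ x ∈ R, ∀ y, LowWalk G l x y → y ∈ R

lemma mem_of_idxOf_append_lt {l₁ l₂ : List V} {z : V} (h : (l₁ ++ l₂).idxOf z < l₁.length) :
    z ∈ l₁ := by
  by_contra hz
  rw [List.idxOf_append_of_notMem hz] at h
  omega

lemma idxOf_append_append {p m q : List V} {u : V} (hp : u ∉ p) (hm : u ∈ m) :
    (p ++ m ++ q).idxOf u = p.length + m.idxOf u := by
  rw [List.append_assoc, List.idxOf_append_of_notMem hp, List.idxOf_append_of_mem hm]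

lemma isLowClosed_append {l s : List V} {S : Finset V} (hS : ∀ x, x ∈ s ↔ x ∈ S)
    (hdisj : ∀ x ∈ s, x ∉ l) : IsLowClosed G (l ++ s) S := by
  intro a ha y ⟨hy, hay, _⟩
  have hal := hdisj a ((hS a).2 ha)
  rw [List.idxOf_append_of_notMem hal] at hay
  rcases List.mem_append.1 hy with hyl | hys
  · have := List.idxOf_append_of_mem (l₂ := s) hyl ▸ List.idxOf_lt_length_of_mem hyl
    omega
  · exact (hS y).1 hys

/-- Low walks leaving a block `m` that has no edges to the earlier vertices `p` end in `m`
(where they are low walks of `m`) or in a later neighbour of `m`. -/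
lemma IsLowClosed.union {p m q : List V} {R S : Finset V} (hmp : ∀ x ∈ m, x ∉ p)
    (hpm : ∀ u ∈ p, ∀ w ∈ m, ¬ G.Adj w u) (hq : ∀ w ∈ m, ∀ u ∈ q, G.Adj w u → u ∈ S)
    (hR : IsLowClosed G m R) (hRm : ∀ x ∈ R, x ∈ m) (hS : IsLowClosed G (p ++ m ++ q) S) :
    IsLowClosed G (p ++ m ++ q) (R ∪ S) := by
  intro a ha y hay
  rcases Finset.mem_union.1 ha with ha | ha
  swap
  · exact Finset.mem_union_right _ (hS a ha y hay)
  obtain ⟨hy, hidx, zs, hch, hzs⟩ := hay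
  have ham := hRm a ha
  have hidxa := idxOf_append_append (q := q) (hmp a ham) ham
  have ha_lt : m.idxOf a < m.length := List.idxOf_lt_length_of_mem ham
  have hstep : ∀ x, ∀ z ∈ zs, x ∈ m → G.Adj x z → z ∈ m := fun x z hz hx hxz => by
    have hz' : z ∈ p ++ m := mem_of_idxOf_append_lt (l₂ := q) <| by
      rw [List.length_append]
      have := hzs z hz
      omega
    exact (List.mem_append.1 hz').resolve_left fun hzp => hpm z hzp x hx hxz
  obtain ⟨hzm, w, hwm, hwy⟩ := isChain_forall_mem_and_exists_rel hch ham hstep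
  rcases List.mem_append.1 hy with hy' | hyq
  · rcases List.mem_append.1 hy' with hyp | hym
    · exact absurd hwy (hpm y hyp w hwm)
    refine Finset.mem_union_left _ (hR a ha y ⟨hym, ?_, zs, hch, fun z hz => ?_⟩)
    · rw [idxOf_append_append (hmp y hym) hym, hidxa] at hidx
      omega
    · have := hzs z hz
      rw [idxOf_append_append (hmp z (hzm z hz)) (hzm z hz), hidxa] at this
      omega
  · exact Finset.mem_union_right _ (hq w hwm y hyq hwy)

lemma upReach_mem_of_isLowClosed {n : ℕ} {π : Fin n ≃ V} {R : Finset V}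
    (hR : IsLowClosed G ((List.finRange n).map π) R) {x u : V} (hx : x ∈ R)
    (h : UpReach G π x u) : u ∈ R := by
  induction h with
  | refl => exact hx
  | tail _ hstep ih =>
    obtain ⟨zs, hch, hzs⟩ := exists_isChain_of_chList_adj _ G hstep.1
    refine hR _ ih _ ⟨List.mem_map.2 ⟨_, List.mem_finRange _, π.apply_symm_apply _⟩, ?_, zs, hch,
      fun z hz => (hzs z hz).1⟩
    simpa only [idxOf_map_finRange] using hstep.2

end LowWalk

section NestedDissection

/-- The separators met on a root path of a nested dissection shrink geometrically, by a factor
`(2/3)^α` per level; this is the sum of that geometric series. -/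
noncomputable def ndConst (α : ℝ) : ℝ := (1 - (2 / 3 : ℝ) ^ α)⁻¹

lemma ndConst_mul_add_one {α : ℝ} (hα : 0 < α) : ndConst α * (2 / 3) ^ α + 1 = ndConst α := by
  have h : (2 / 3 : ℝ) ^ α < 1 := Real.rpow_lt_one (by norm_num) (by norm_num) hα
  have h1 : 1 - (2 / 3 : ℝ) ^ α ≠ 0 := by linarith
  rw [ndConst]
  field_simp
  ring

lemma one_le_ndConst {α : ℝ} (hα : 0 < α) : 1 ≤ ndConst α := by
  have : 0 ≤ ndConst α * (2 / 3) ^ α := by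
    rw [ndConst]
    have : (2 / 3 : ℝ) ^ α < 1 := Real.rpow_lt_one (by norm_num) (by norm_num) hα
    have : 0 ≤ (2 / 3 : ℝ) ^ α := by positivity
    positivity
  linarith [ndConst_mul_add_one hα]

lemma card_union_le_ndBound [DecidableEq V] {c α : ℝ} (hα : 0 < α) (hc : 0 ≤ c)
    {R S M U : Finset V} (hR : (R.card : ℝ) ≤ c * ndConst α * M.card ^ α)
    (hS : (S.card : ℝ) ≤ c * U.card ^ α) (hMU : 3 * M.card ≤ 2 * U.card) :
    ((R ∪ S).card : ℝ) ≤ c * ndConst α * U.card ^ α := by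
  have hM : (M.card : ℝ) ^ α ≤ (2 / 3) ^ α * U.card ^ α := by
    rw [← Real.mul_rpow (by norm_num) (by positivity)]
    have : (3 * M.card : ℝ) ≤ 2 * U.card := by exact_mod_cast hMU
    exact Real.rpow_le_rpow (by positivity) (by linarith) hα.le
  have := one_le_ndConst hα
  calc ((R ∪ S).card : ℝ) ≤ R.card + S.card := by exact_mod_cast Finset.card_union_le R S
    _ ≤ c * ndConst α * ((2 / 3) ^ α * U.card ^ α) + c * U.card ^ α := by
      gcongr
      exact hR.trans (by gcongr)
    _ = c * (ndConst α * (2 / 3) ^ α + 1) * U.card ^ α := by ring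
    _ = c * ndConst α * U.card ^ α := by rw [ndConst_mul_add_one hα]

variable [DecidableEq V] {G : SimpleGraph V} {c α : ℝ}

lemma IsNDOrder.mem_iff {U : Finset V} {l : List V} (h : IsNDOrder G c α U l) {x : V} :
    x ∈ l ↔ x ∈ U := by
  induction h with
  | empty => simp
  | step _ _ _ hU _ _ _ _ _ hlS _ _ ihA ihB =>
    rw [← hU, ← hlS]
    simp [ihA, ihB]

theorem IsNDOrder.exists_isLowClosed (hα : 0 < α) (hc : 0 ≤ c) {U : Finset V} {l : List V}
    (h : IsNDOrder G c α U l) : ∀ x ∈ U, ∃ R : Finset V, x ∈ R ∧ R ⊆ U ∧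
      IsLowClosed G l R ∧ (R.card : ℝ) ≤ c * ndConst α * U.card ^ α := by
  induction h with
  | empty => simp
  | @step U S A B lA lB lS hAB hAS hBS hU hsep hAc hBc hSc _ hlS ndA ndB ihA ihB =>
    have hAU : A ⊆ U := hU ▸ Finset.subset_union_left.trans Finset.subset_union_left
    have hBU : B ⊆ U := hU ▸ Finset.subset_union_right.trans Finset.subset_union_left
    have mS : ∀ x, x ∈ lS ↔ x ∈ S := fun x => by rw [← hlS, List.mem_toFinset]
    have hSU : S ⊆ U := hU ▸ Finset.subset_union_right
    have hS : IsLowClosed G (lA ++ lB ++ lS) S := isLowClosed_append mS fun x hx hx' => by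
      rcases List.mem_append.1 hx' with h | h
      · exact Finset.disjoint_left.1 hAS (ndA.mem_iff.1 h) ((mS x).1 hx)
      · exact Finset.disjoint_left.1 hBS (ndB.mem_iff.1 h) ((mS x).1 hx)
    have hSbound : (S.card : ℝ) ≤ c * ndConst α * U.card ^ α :=
      hSc.trans (le_mul_of_one_le_left (by positivity) (one_le_ndConst hα) |>.trans_eq (by ring))
    intro x hx
    rw [← hU, Finset.mem_union, Finset.mem_union] at hx
    rcases hx with (hxA | hxB) | hxS
    · obtain ⟨R, hxR, hRA, hR, hRc⟩ := ihA x hxA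
      have hq : ∀ w ∈ lA, ∀ u ∈ lB ++ lS, G.Adj w u → u ∈ S := fun w hw u hu hwu =>
        (List.mem_append.1 hu).elim
          (fun hu => absurd hwu (hsep w (ndA.mem_iff.1 hw) u (ndB.mem_iff.1 hu))) (mS u).1
      have hcl := IsLowClosed.union (p := []) (by simp) (by simp) hq hR
        (fun x hx => ndA.mem_iff.2 (hRA hx)) (by simpa using hS)
      exact ⟨R ∪ S, Finset.mem_union_left _ hxR, Finset.union_subset (hRA.trans hAU) hSU,
        by simpa using hcl, card_union_le_ndBound hα hc hRc hSc hAc⟩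
    · obtain ⟨R, hxR, hRB, hR, hRc⟩ := ihB x hxB
      have hBA : ∀ x ∈ lB, x ∉ lA := fun x hx hx' =>
        Finset.disjoint_left.1 hAB (ndA.mem_iff.1 hx') (ndB.mem_iff.1 hx)
      have hAB' : ∀ u ∈ lA, ∀ w ∈ lB, ¬ G.Adj w u := fun u hu w hw hwu =>
        hsep u (ndA.mem_iff.1 hu) w (ndB.mem_iff.1 hw) hwu.symm
      have hcl := IsLowClosed.union hBA hAB' (fun _ _ u hu _ => (mS u).1 hu) hR
        (fun x hx => ndB.mem_iff.2 (hRB hx)) hS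
      exact ⟨R ∪ S, Finset.mem_union_left _ hxR, Finset.union_subset (hRB.trans hBU) hSU, hcl,
        card_union_le_ndBound hα hc hRc hSc hBc⟩
    · exact ⟨S, hxS, hSU, hS, hSbound⟩

end NestedDissection

section UpperBound

variable [Fintype V] {n : ℕ} {G : SimpleGraph V} {π : Fin n ≃ V}

theorem searchSpace_le_of_isNDOrder [DecidableEq V] {c α : ℝ} (hα : 0 < α) (hc : 0 ≤ c)
    (hnd : IsNDOrder G c α Finset.univ ((List.finRange n).map π)) (v : V) :
    (nVertsSS G π v : ℝ) ≤ c * ndConst α * Fintype.card V ^ α ∧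
      (nArcsSS G π v : ℝ) ≤ (c * ndConst α * Fintype.card V ^ α) ^ 2 := by
  obtain ⟨R, hvR, -, hR, hRc⟩ := hnd.exists_isLowClosed hα hc v (Finset.mem_univ v)
  rw [Finset.card_univ] at hRc
  have hSS := fun u => upReach_mem_of_isLowClosed hR hvR (u := u)
  constructor
  · exact (Nat.cast_le.2 (nVertsSS_le_card hSS)).trans hRc
  · calc (nArcsSS G π v : ℝ) ≤ R.card * R.card := by exact_mod_cast nArcsSS_le_card_mul_card hSS
      _ ≤ _ := by rw [sq]; exact mul_self_le_mul_self (Nat.cast_nonneg _) hRc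

end UpperBound

lemma sup_le_mul_sup_and_sum_le_mul_sum {ι : Type*} [Fintype ι] (f g : ι → ℕ) {T : Finset ι}
    {u l K : ℝ} (hT : 2 * Fintype.card ι < 3 * T.card) (hf : ∀ i, (f i : ℝ) ≤ u)
    (hg : ∀ i ∈ T, l ≤ g i) (hK : 0 ≤ K) (hul : 3 * u ≤ 2 * K * l) :
    ((Finset.univ.sup f : ℕ) : ℝ) ≤ K * (Finset.univ.sup g : ℕ) ∧
      ∑ i, (f i : ℝ) ≤ K * ∑ i, (g i : ℝ) := by
  obtain ⟨t, ht⟩ := Finset.card_pos.1 (by omega : 0 < T.card)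
  have hu : 0 ≤ u := (Nat.cast_nonneg _).trans (hf t)
  constructor
  · obtain ⟨i, -, hi⟩ := Finset.exists_mem_eq_sup Finset.univ ⟨t, Finset.mem_univ t⟩ f
    calc ((Finset.univ.sup f : ℕ) : ℝ) = f i := by rw [hi]
      _ ≤ K * l := by linarith [hf i]
      _ ≤ K * g t := by gcongr; exact hg t ht
      _ ≤ K * (Finset.univ.sup g : ℕ) := by
        gcongr; exact_mod_cast Finset.le_sup (f := g) (Finset.mem_univ t)
  · have hsumf : ∑ i, (f i : ℝ) ≤ Fintype.card ι * u := by
      simpa using Finset.sum_le_sum fun i (_ : i ∈ Finset.univ) => hf i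
    have hsumg : T.card * l ≤ ∑ i, (g i : ℝ) := by
      calc T.card * l ≤ ∑ i ∈ T, (g i : ℝ) := by simpa using Finset.sum_le_sum hg
        _ ≤ ∑ i, (g i : ℝ) := Finset.sum_le_sum_of_subset_of_nonneg (Finset.subset_univ T)
          fun _ _ _ => Nat.cast_nonneg _
    have hT' : (2 * Fintype.card ι : ℝ) ≤ 3 * T.card := by exact_mod_cast hT.le
    nlinarith [mul_le_mul_of_nonneg_left hsumg hK]

theorem stmt6_general (α c c' : ℝ) (hα0 : 0 < α) (hc : 0 < c) (hc' : 0 < c') :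
    ∃ K : ℝ, ∀ (V : Type) [Fintype V] [DecidableEq V] (n : ℕ) (G : SimpleGraph V),
      G.Connected →
      ∀ πnd : Fin n ≃ V,
      (∀ U : Finset V, U.Nonempty →
        ∃ S : Finset V, IsBalancedSepOn G U S ∧ (S.card : ℝ) ≤ c * (U.card : ℝ) ^ α) →
      (∀ S : Finset V, IsBalancedSepOn G Finset.univ S → c' * (n : ℝ) ^ α ≤ (S.card : ℝ)) →
      2 ≤ c' * (n : ℝ) ^ α →
      IsNDOrder G c α Finset.univ ((List.finRange n).map ⇑πnd) →
      ∀ π : Fin n ≃ V,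
        (((Finset.univ.sup (nVertsSS G πnd) : ℕ) : ℝ) ≤
          K * ((Finset.univ.sup (nVertsSS G π) : ℕ) : ℝ)) ∧
        ((∑ v : V, (nVertsSS G πnd v : ℝ)) ≤ K * ∑ v : V, (nVertsSS G π v : ℝ)) ∧
        (((Finset.univ.sup (nArcsSS G πnd) : ℕ) : ℝ) ≤
          K * ((Finset.univ.sup (nArcsSS G π) : ℕ) : ℝ)) ∧
        ((∑ v : V, (nArcsSS G πnd v : ℝ)) ≤ K * ∑ v : V, (nArcsSS G π v : ℝ)) := by
  set k := c * ndConst α / c'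
  have hk : 0 ≤ k := div_nonneg (mul_nonneg hc.le (by linarith [one_le_ndConst hα0])) hc'.le
  -- the vertex bounds `k·Y`, `Y` need `K ≥ 3k/2`; the arc bounds `(k·Y)²`, `Y²/4` need `K ≥ 6k²`
  refine ⟨3 / 2 * k + 6 * k ^ 2, fun V _ _ n G hG πnd _ hmin h2 hnd π => ?_⟩
  have hcard : Fintype.card V = n := by simpa using Fintype.card_congr πnd.symm
  have : Nonempty V := Fintype.card_pos_iff.1 <| hcard ▸ Nat.pos_of_ne_zero fun hn => by
    simp only [hn, Nat.cast_zero, Real.zero_rpow hα0.ne', mul_zero] at h2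
    linarith
  set Y := c' * (n : ℝ) ^ α
  have hY : 0 ≤ Y := by linarith
  have hkY : c * ndConst α * Fintype.card V ^ α = k * Y := by
    simp only [k, Y, hcard]
    field_simp
  have hup := fun v => hkY ▸ searchSpace_le_of_isNDOrder hα0 hc.le hnd v
  obtain ⟨T, hT, hlow⟩ := exists_large_le_nVertsSS_and_nArcsSS hG π h2 hmin
  obtain ⟨hV1, hV2⟩ := sup_le_mul_sup_and_sum_le_mul_sum (K := 3 / 2 * k + 6 * k ^ 2)
    (nVertsSS G πnd) (nVertsSS G π) hT
    (fun v => (hup v).1) (fun v hv => (hlow v hv).1) (by positivity)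
    (by nlinarith [mul_nonneg (sq_nonneg k) hY])
  obtain ⟨hA1, hA2⟩ := sup_le_mul_sup_and_sum_le_mul_sum (K := 3 / 2 * k + 6 * k ^ 2)
    (nArcsSS G πnd) (nArcsSS G π) hT
    (fun v => (hup v).2) (fun v hv => (hlow v hv).2) (by positivity)
    (by nlinarith [mul_nonneg hk (sq_nonneg Y)])
  exact ⟨hV1, hV2, hA1, hA2⟩

/-- Under the stated separator hypotheses, a nested dissection order is
a constant-factor approximation (the constant `K` depending only on `α`, `c`, `c'`)
of the optimal maximum and average search space sizes, in vertices and in arcs. -/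
theorem stmt6 (α c c' : ℝ) (hα0 : 0 < α) (hα1 : α < 1) (hc : 0 < c) (hc' : 0 < c') :
    ∃ K : ℝ, ∀ (V : Type) [Fintype V] [DecidableEq V] (n : ℕ) (G : SimpleGraph V),
      G.Connected →
      ∀ πnd : Fin n ≃ V,
      (∀ U : Finset V, U.Nonempty →
        ∃ S : Finset V, IsBalancedSepOn G U S ∧ (S.card : ℝ) ≤ c * (U.card : ℝ) ^ α) →
      (∀ S : Finset V, IsBalancedSepOn G Finset.univ S → c' * (n : ℝ) ^ α ≤ (S.card : ℝ)) →
      2 ≤ c' * (n : ℝ) ^ α →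
      IsNDOrder G c α Finset.univ ((List.finRange n).map ⇑πnd) →
      ∀ π : Fin n ≃ V,
        (((Finset.univ.sup (nVertsSS G πnd) : ℕ) : ℝ) ≤
          K * ((Finset.univ.sup (nVertsSS G π) : ℕ) : ℝ)) ∧
        ((∑ v : V, (nVertsSS G πnd v : ℝ)) ≤ K * ∑ v : V, (nVertsSS G π v : ℝ)) ∧
        (((Finset.univ.sup (nArcsSS G πnd) : ℕ) : ℝ) ≤
          K * ((Finset.univ.sup (nArcsSS G π) : ℕ) : ℝ)) ∧
        ((∑ v : V, (nArcsSS G πnd v : ℝ)) ≤ K * ∑ v : V, (nArcsSS G π v : ℝ)) :=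
  stmt6_general α c c' hα0 hc hc'
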